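/- For all real constants C>0, c>0, M>0 and every α∈(0,1) there exists a constant C'>0 such that: for every D∈(0,1) and every X≥0 satisfying X ≤ C( D² e^{c s} + M²/s ) for all s>0, one has X ≤ C' ( log(1/D) )^{−α}. -/
import Mathlib


open Real

/-- For all constants `C > 0`, `c > 0`, `M > 0` and every `α ∈ (0,1)`
there exists `C' > 0` such that: for every `D ∈ (0,1)` and every `X ≥ 0` with
`X ≤ C(D² e^{cs} + M²/s)` for all `s > 0`, one has `X ≤ C'(log(1/D))^{−α}`. -/
theorem stmt_16 (C c M α : ℝ) (hC : 0 < C) (hc : 0 < c) (hM : 0 < M)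
    (hα : α ∈ Set.Ioo (0:ℝ) 1) :
    ∃ C' > (0:ℝ), ∀ D ∈ Set.Ioo (0:ℝ) 1, ∀ X : ℝ, 0 ≤ X →
      (∀ s : ℝ, 0 < s → X ≤ C * (D ^ 2 * exp (c * s) + M ^ 2 / s)) →
      X ≤ C' * (Real.log (1 / D)) ^ (-α) := by
  obtain ⟨hα0, hα1⟩ := hα
  set T : ℝ := max 1 (c ^ ((1 - α)⁻¹)) with hT
  have hT1 : (1:ℝ) ≤ T := le_max_left _ _
  have hT0 : (0:ℝ) < T := lt_of_lt_of_le one_pos hT1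
  set K : ℝ := c * T ^ α with hK
  refine ⟨C * (Real.exp K + M ^ 2), by positivity, ?_⟩
  rintro D ⟨hD0, hD1⟩ X hX hXs
  set ξ : ℝ := Real.log (1 / D) with hxi
  have hξ : 0 < ξ := by
    have : Real.log D < 0 := Real.log_neg hD0 hD1
    simp [hxi, Real.log_div, hD0.ne', Real.log_one]
    linarith
  have hDexp : D = Real.exp (-ξ) := by
    have : ξ = -Real.log D := by
      rw [hxi, one_div, Real.log_inv]
    rw [this, neg_neg, Real.exp_log hD0]
  set s : ℝ := ξ ^ α with hs
  have hs0 : 0 < s := Real.rpow_pos_of_pos hξ α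
  -- key: c * s ≤ ξ + K
  have hkey : c * s ≤ ξ + K := by
    rcases le_or_gt ξ T with h | h
    · have : s ≤ T ^ α := Real.rpow_le_rpow hξ.le h hα0.le
      nlinarith [mul_le_mul_of_nonneg_left this hc.le]
    · have h1ξ : (1:ℝ) ≤ ξ := le_trans hT1 h.le
      have hcle : c ≤ ξ ^ (1 - α) := by
        have h2 : c ^ ((1 - α)⁻¹) ≤ T := le_max_right _ _
        have h3 : (c ^ ((1 - α)⁻¹)) ^ (1 - α) ≤ ξ ^ (1 - α) :=
          Real.rpow_le_rpow (Real.rpow_nonneg hc.le _) (le_trans h2 h.le) (by linarith)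
        rwa [← Real.rpow_mul hc.le, inv_mul_cancel₀ (by linarith : (1:ℝ) - α ≠ 0),
          Real.rpow_one] at h3
      have : c * s ≤ ξ ^ (1 - α) * ξ ^ α :=
        mul_le_mul_of_nonneg_right hcle hs0.le
      rw [← Real.rpow_add hξ] at this
      simp only [sub_add_cancel, Real.rpow_one] at this
      have hK0 : 0 ≤ K := by positivity
      linarith
  -- exp(-ξ) ≤ ξ^(-α)
  have hexpxi : Real.exp (-ξ) ≤ ξ ^ (-α) := by
    rw [Real.rpow_neg hξ.le, Real.exp_neg]
    apply inv_anti₀ (Real.rpow_pos_of_pos hξ α)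
    have : ξ ^ α ≤ max 1 ξ := by
      rcases le_or_gt ξ 1 with h | h
      · exact le_trans (Real.rpow_le_one hξ.le h hα0.le) (le_max_left _ _)
      · calc ξ ^ α ≤ ξ ^ (1:ℝ) := Real.rpow_le_rpow_of_exponent_le h.le hα1.le
          _ = ξ := Real.rpow_one ξ
          _ ≤ max 1 ξ := le_max_right _ _
    refine le_trans this (max_le (Real.one_le_exp hξ.le) ?_)
    linarith [Real.add_one_le_exp ξ]
  have hbound := hXs s hs0
  have h1 : D ^ 2 * Real.exp (c * s) ≤ Real.exp K * ξ ^ (-α) := by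
    rw [hDexp, ← Real.exp_nat_mul, ← Real.exp_add]
    have : ((2:ℕ):ℝ) * (-ξ) + c * s ≤ K + (-ξ) := by push_cast; linarith
    calc Real.exp (((2:ℕ):ℝ) * (-ξ) + c * s) ≤ Real.exp (K + (-ξ)) := Real.exp_le_exp.mpr this
      _ = Real.exp K * Real.exp (-ξ) := Real.exp_add _ _
      _ ≤ Real.exp K * ξ ^ (-α) :=
        mul_le_mul_of_nonneg_left hexpxi (Real.exp_pos _).le
  have h2 : M ^ 2 / s = M ^ 2 * ξ ^ (-α) := by
    rw [div_eq_mul_inv, hs, ← Real.rpow_neg hξ.le]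
  calc X ≤ C * (D ^ 2 * Real.exp (c * s) + M ^ 2 / s) := hbound
    _ ≤ C * (Real.exp K * ξ ^ (-α) + M ^ 2 * ξ ^ (-α)) := by
        rw [h2]; exact mul_le_mul_of_nonneg_left (by linarith) hC.le
    _ = C * (Real.exp K + M ^ 2) * ξ ^ (-α) := by ring
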